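/- arXiv:1702.05353 — 11 statements merged into one kernel-verified Lean document; each statement's English description precedes it below -/
import Mathlib

section
/- Let A be a set, let m, k, ℓ ≥ 1 be integers, and let t_0,…,t_{k+1} : A^{m+2} → A be operations satisfying the Jónsson-type condition (B). Let α be a tolerance with respect to the operations t_0,…,t_{k+1}, and let R, S_0, S_1, …, S_ℓ be reflexive relations on A, each compatible with every t_i, such that R = S_0 ∘ S_1 ∘ ⋯ ∘ S_ℓ. Set Θ = (α ∩ S_0) ∘ (α ∩ S_1) ∘ ⋯ ∘ (α ∩ S_ℓ). Then α ∩ (R ∘_m R^⌣) ⊆ Θ ∘_k Θ^⌣. -/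
/-- Relational composition: `a (Comp R S) c` iff there is `b` with `a R b` and `b S c`. -/
def Comp {A : Type*} (R S : A → A → Prop) : A → A → Prop :=
  fun a c => ∃ b, R a b ∧ S b c

/-- `AltComp R S m` is the alternating composition `R ∘ S ∘ R ∘ ⋯` with exactly `m` factors. -/
def AltComp {A : Type*} : (R S : A → A → Prop) → ℕ → A → A → Prop
  | _, _, 0 => Eq
  | R, _, 1 => R
  | R, S, (n+2) => Comp R (AltComp S R (n+1))

/-- Converse relation. -/
def Conv {A : Type*} (R : A → A → Prop) : A → A → Prop := fun a b => R b a

/-- Intersection of relations. -/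
def InterRel {A : Type*} (R S : A → A → Prop) : A → A → Prop := fun a b => R a b ∧ S a b

/-- `RelPow R n` is `R ∘ R ∘ ⋯ ∘ R` with `n` factors. -/
def RelPow {A : Type*} (R : A → A → Prop) : ℕ → A → A → Prop
  | 0 => Eq
  | 1 => R
  | n+2 => Comp R (RelPow R (n+1))

/-- Compatibility of a relation with a ternary operation. -/
def Compat3 {A : Type*} (f : A → A → A → A) (R : A → A → Prop) : Prop :=
  ∀ a a' b b' c c', R a a' → R b b' → R c c' → R (f a b c) (f a' b' c')

/-- Compatibility of a relation with an `n`-ary operation. -/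
def CompatV {A : Type*} {n : ℕ} (f : (Fin n → A) → A) (R : A → A → Prop) : Prop :=
  ∀ a b : Fin n → A, (∀ i, R (a i) (b i)) → R (f a) (f b)

/-- Composition `S 0 ∘ S 1 ∘ ⋯ ∘ S (n-1)` of a family of `n` relations. -/
def FamComp {A : Type*} : (n : ℕ) → (Fin n → A → A → Prop) → A → A → Prop
  | 0, _ => Eq
  | 1, S => S 0
  | n+2, S => Comp (S 0) (FamComp (n+1) (fun i => S i.succ))

/-- The substitution `x_0, x_0, x_2, x_2, x_4, x_4, …` (arguments identified in
consecutive pairs starting from the first two). -/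
def EvenPair {A : Type*} (m : ℕ) (x : Fin (m+2) → A) : Fin (m+2) → A :=
  fun j => x ⟨2 * (j.val / 2), by have := j.isLt; omega⟩

/-- The substitution `x_0, x_1, x_1, x_3, x_3, …` (arguments identified in
consecutive pairs starting from the second and third). -/
def OddPair {A : Type*} (m : ℕ) (x : Fin (m+2) → A) : Fin (m+2) → A :=
  fun j => x ⟨2 * ((j.val + 1) / 2) - 1, by have := j.isLt; omega⟩

/-!
Write the `R ∘_m R⌣`-chain from `a` to `c` as a pair of tuples `E = EvenPair m Z` and
`O = OddPair m Z` with `E j R O j` in every coordinate, and refine each coordinate into an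
`S 0 ∘ ⋯ ∘ S ℓ`-chain. Applying `t i` coordinatewise gives an `S 0 ∘ ⋯ ∘ S ℓ`-chain from `t i E`
to `t i O` whose links also lie in `α`: by (B2) and compatibility, every value of `t i` on a tuple
beginning with `a` and ending with `c` is `α`-related to both `a` and `c`, and `a α c`. Hence
`t i E Θ t i O` for every `i`, and (B1), (B3), (B4) glue these links into the zigzag
`a = t 1 E Θ t 1 O = t 2 O Θ⌣ t 2 E = t 3 E Θ t 3 O = ⋯ = c` with `k` links.
-/

section Relations

variable {A : Type*}

theorem famComp_iff_exists_chain {n : ℕ} {S : Fin n → A → A → Prop} {x y : A} :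
    FamComp n S x y ↔ ∃ g : ℕ → A, g 0 = x ∧ g n = y ∧ ∀ q : Fin n, S q (g q) (g (q + 1)) := by
  induction n using Nat.twoStepInduction generalizing x with
  | zero =>
    refine ⟨fun h => ⟨fun _ => x, rfl, h, fun q => q.elim0⟩, ?_⟩
    rintro ⟨g, rfl, rfl, -⟩
    rfl
  | one =>
    change S 0 x y ↔ _
    refine ⟨fun h => ⟨fun j => if j = 0 then x else y, rfl, rfl, fun q => ?_⟩, ?_⟩
    · simpa [Fin.fin_one_eq_zero q] using h
    · rintro ⟨g, rfl, rfl, hg⟩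
      simpa using hg 0
  | more n _ ih =>
    change (∃ b, S 0 x b ∧ FamComp (n + 1) (fun q => S q.succ) b y) ↔ _
    simp only [ih, Fin.forall_fin_succ (n := n + 1), Fin.val_succ, Fin.val_zero]
    constructor
    · rintro ⟨b, hxb, g, rfl, hgy, hg⟩
      exact ⟨fun j => Nat.casesOn j x g, rfl, hgy, hxb, hg⟩
    · rintro ⟨g, rfl, hgy, hg0, hg⟩
      exact ⟨g 1, hg0, fun j => g (j + 1), rfl, hgy, hg⟩

theorem altComp_eq_famComp (R S : A → A → Prop) (n : ℕ) :
    AltComp R S n = FamComp n (fun j => if (j : ℕ) % 2 = 0 then R else S) := by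
  induction n using Nat.twoStepInduction generalizing R S with
  | zero => rfl
  | one => rfl
  | more n _ ih =>
    change Comp R (AltComp S R (n + 1)) = Comp R (FamComp (n + 1) _)
    rw [ih]
    congr 2
    funext q
    simp only [Fin.val_succ, Nat.succ_mod_two_eq_zero_iff]
    split_ifs <;> first | rfl | omega

theorem altComp_iff_exists_chain {R S : A → A → Prop} {n : ℕ} {a c : A} :
    AltComp R S n a c ↔ ∃ u : ℕ → A, u 0 = a ∧ u n = c ∧
      ∀ j < n, (if j % 2 = 0 then R else S) (u j) (u (j + 1)) := by
  simp only [altComp_eq_famComp, famComp_iff_exists_chain, Fin.forall_iff]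

theorem FamComp.map {B : Type*} {n : ℕ} {S : Fin n → A → A → Prop} {T : Fin n → B → B → Prop}
    (f : A → B) (hf : ∀ q x y, S q x y → T q (f x) (f y)) {x y : A} (h : FamComp n S x y) :
    FamComp n T (f x) (f y) := by
  obtain ⟨g, rfl, rfl, hg⟩ := famComp_iff_exists_chain.1 h
  exact famComp_iff_exists_chain.2 ⟨f ∘ g, rfl, rfl, fun q => hf q _ _ (hg q)⟩

theorem famComp_pi {ι : Type*} {n : ℕ} {S : Fin n → A → A → Prop} {X Y : ι → A}
    (h : ∀ j, FamComp n S (X j) (Y j)) :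
    FamComp n (fun q V W => ∀ j, S q (V j) (W j)) X Y := by
  choose g hg₀ hgn hg using fun j => famComp_iff_exists_chain.1 (h j)
  exact famComp_iff_exists_chain.2 ⟨fun q j => g j q, funext hg₀, funext hgn, fun q j => hg j q⟩

end Relations

section Tolerance

variable {A : Type*} {N : ℕ} {α : A → A → Prop} {f : (Fin N → A) → A} {i₀ i₁ : Fin N}

theorem rel_apply_of_rel_ends (hαrefl : ∀ a, α a a) (hfα : CompatV f α)
    (hf : ∀ X, X i₁ = X i₀ → f X = X i₀) {W : Fin N → A} {v : A}
    (h₀ : α (W i₀) v) (h₁ : α (W i₁) v) : α (f W) v := by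
  set X := Function.update (Function.update W i₀ v) i₁ v
  have hX₁ : X i₁ = v := Function.update_self ..
  have hX₀ : X i₀ = v := by
    by_cases h : i₀ = i₁
    · rw [h, hX₁]
    · simp [X, Function.update_of_ne h]
  have hWX : ∀ j, α (W j) (X j) := by
    intro j
    simp only [X, Function.update_apply]
    split_ifs with hj₁ hj₀
    · exact hj₁ ▸ h₁
    · exact hj₀ ▸ h₀
    · exact hαrefl _
  simpa [hf X (hX₁.trans hX₀.symm), hX₀] using hfα W X hWX

theorem rel_apply_of_ends (hαrefl : ∀ a, α a a) (hαsymm : ∀ a b, α a b → α b a)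
    (hfα : CompatV f α) (hf : ∀ X, X i₁ = X i₀ → f X = X i₀) {a c : A} (hac : α a c)
    {W W' : Fin N → A} (hW₀ : W i₀ = a) (hW₁ : W i₁ = c) (hW'₀ : W' i₀ = a) (hW'₁ : W' i₁ = c) :
    α (f W) (f W') := by
  -- `f W'` is `α`-related to both ends `a` and `c`, which are the ends of `W`.
  have ha : α (f W') a :=
    rel_apply_of_rel_ends hαrefl hfα hf (hW'₀ ▸ hαrefl a) (hW'₁ ▸ hαsymm a c hac)
  have hc : α (f W') c :=
    rel_apply_of_rel_ends hαrefl hfα hf (hW'₀ ▸ hac) (hW'₁ ▸ hαrefl c)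
  exact rel_apply_of_rel_ends hαrefl hfα hf (hW₀ ▸ hαsymm _ _ ha) (hW₁ ▸ hαsymm _ _ hc)

theorem famComp_interRel_apply {n : ℕ} {S : Fin n → A → A → Prop}
    (hαrefl : ∀ a, α a a) (hαsymm : ∀ a b, α a b → α b a) (hfα : CompatV f α)
    (hSrefl : ∀ q a, S q a a) (hfS : ∀ q, CompatV f (S q))
    (hf : ∀ X, X i₁ = X i₀ → f X = X i₀) (hi : i₀ ≠ i₁) {a c : A} (hac : α a c)
    {X Y : Fin N → A} (hX₀ : X i₀ = a) (hX₁ : X i₁ = c) (hY₀ : Y i₀ = a) (hY₁ : Y i₁ = c)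
    (hXY : ∀ j, FamComp n S (X j) (Y j)) :
    FamComp n (fun q => InterRel α (S q)) (f X) (f Y) := by
  -- Resetting the two end coordinates keeps every intermediate tuple of the chain inside the
  -- `α`-block of `a` and `c`.
  set clamp : (Fin N → A) → Fin N → A := fun V => Function.update (Function.update V i₀ a) i₁ c
  have hclamp₀ : ∀ V, clamp V i₀ = a := fun V => by simp [clamp, Function.update_of_ne hi]
  have hclamp₁ : ∀ V, clamp V i₁ = c := fun V => Function.update_self ..
  have hclampX : clamp X = X := by simp only [clamp, ← hX₀, ← hX₁, Function.update_eq_self]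
  have hclampY : clamp Y = Y := by simp only [clamp, ← hY₀, ← hY₁, Function.update_eq_self]
  have hstep : ∀ q V W, (∀ j, S q (V j) (W j)) →
      InterRel α (S q) (f (clamp V)) (f (clamp W)) := by
    refine fun q V W hVW => ⟨rel_apply_of_ends hαrefl hαsymm hfα hf hac (hclamp₀ V) (hclamp₁ V)
      (hclamp₀ W) (hclamp₁ W), hfS q _ _ fun j => ?_⟩
    simp only [clamp, Function.update_apply]
    split_ifs
    exacts [hSrefl q c, hSrefl q a, hVW j]
  simpa only [Function.comp_apply, hclampX, hclampY] using (famComp_pi hXY).map (f ∘ clamp) hstep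

end Tolerance

section Jonsson

variable {A : Type*}

theorem altComp_conv_of_zigzag {k : ℕ} (T : A → A → Prop) (e o : Fin (k + 2) → A)
    (hT : ∀ i, T (e i) (o i))
    (heven : ∀ i : Fin (k + 1), (i : ℕ) % 2 = 0 → e i.castSucc = e i.succ)
    (hodd : ∀ i : Fin (k + 1), (i : ℕ) % 2 = 1 → o i.castSucc = o i.succ)
    (hlast : e (Fin.last (k + 1)) = o (Fin.last (k + 1))) :
    AltComp T (Conv T) k (e 0) (e (Fin.last (k + 1))) := by
  -- The chain `e 0 = e 1 T o 1 = o 2 T⁻¹ e 2 = e 3 T o 3 = ⋯`.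
  set p : ℕ → A := fun j =>
    if j % 2 = 0 then e ⟨min j (k + 1), by omega⟩ else o ⟨min j (k + 1), by omega⟩
  have hp : ∀ j (hj : j ≤ k + 1), p j = if j % 2 = 0 then e ⟨j, by omega⟩ else o ⟨j, by omega⟩ :=
    fun j hj => by simp only [p, min_eq_left hj]
  have heven' : ∀ j (hj : j ≤ k), j % 2 = 0 → e ⟨j, by omega⟩ = e ⟨j + 1, by omega⟩ :=
    fun j hj => heven ⟨j, by omega⟩
  have hodd' : ∀ j (hj : j ≤ k), j % 2 = 1 → o ⟨j, by omega⟩ = o ⟨j + 1, by omega⟩ :=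
    fun j hj => hodd ⟨j, by omega⟩
  refine altComp_iff_exists_chain.2 ⟨p, by simp [p], ?_, fun j hj => ?_⟩
  · rw [hp k (by omega)]
    split_ifs with hk
    · exact heven' k le_rfl hk
    · exact (hodd' k le_rfl (by omega)).trans hlast.symm
  · rw [hp j (by omega), hp (j + 1) (by omega)]
    by_cases hj2 : j % 2 = 0
    · simpa only [if_pos hj2, if_neg (show ¬(j + 1) % 2 = 0 by omega), heven' j hj.le hj2]
        using hT _
    · simpa only [if_neg hj2, if_pos (show (j + 1) % 2 = 0 by omega), hodd' j hj.le (by omega),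
        Conv] using hT _

theorem exists_evenPair_rel_oddPair {R : A → A → Prop} (hR : ∀ a, R a a) {m : ℕ} {a c : A}
    (h : AltComp R (Conv R) m a c) :
    ∃ Z : Fin (m + 2) → A, (∀ j, R (EvenPair m Z j) (OddPair m Z j)) ∧
      EvenPair m Z 0 = a ∧ OddPair m Z 0 = a ∧
      EvenPair m Z (Fin.last (m + 1)) = c ∧ OddPair m Z (Fin.last (m + 1)) = c := by
  obtain ⟨u, hu₀, hum, hu⟩ := altComp_iff_exists_chain.1 h
  -- Pad the chain `a = u 0, …, u m = c` with a second copy of `c`; column `j` of the pair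
  -- `(EvenPair m Z, OddPair m Z)` is then the `R`-link between `u (j - 1)` and `u j`, read in
  -- the direction in which it is an `R`-step.
  refine ⟨fun j => u (min j m), fun ⟨j, hj⟩ => ?_, ?_, ?_, ?_, ?_⟩
  all_goals simp only [EvenPair, OddPair, Fin.val_zero, Fin.val_last]
  · by_cases hjm : j = 0 ∨ j = m + 1
    · rw [show min (2 * ((j + 1) / 2) - 1) m = min (2 * (j / 2)) m by omega]
      exact hR _
    have := hu (j - 1) (by omega)
    by_cases hj2 : j % 2 = 0
    · rw [if_neg (by omega), show j - 1 + 1 = j by omega] at this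
      rwa [min_eq_left (by omega), min_eq_left (by omega), show 2 * (j / 2) = j by omega,
        show 2 * ((j + 1) / 2) - 1 = j - 1 by omega]
    · rw [if_pos (by omega), show j - 1 + 1 = j by omega] at this
      rwa [min_eq_left (by omega), min_eq_left (by omega), show 2 * (j / 2) = j - 1 by omega,
        show 2 * ((j + 1) / 2) - 1 = j by omega]
  · simpa using hu₀
  · simpa using hu₀
  · rwa [min_eq_right (by omega)]
  · rwa [min_eq_right (by omega)]

end Jonsson

theorem stmt0 {A : Type*} (m k ℓ : ℕ)
    (t : Fin (k+2) → (Fin (m+2) → A) → A)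
    (hB1 : ∀ x : Fin (m+2) → A, t 0 x = x 0)
    (hB2 : ∀ (i : Fin (k+2)) (x : Fin (m+2) → A), x (Fin.last (m+1)) = x 0 → t i x = x 0)
    (hB3even : ∀ (i : ℕ) (hi : i ≤ k), i % 2 = 0 →
      ∀ x : Fin (m+2) → A, t ⟨i, by omega⟩ (EvenPair m x) = t ⟨i+1, by omega⟩ (EvenPair m x))
    (hB3odd : ∀ (i : ℕ) (hi : i ≤ k), i % 2 = 1 →
      ∀ x : Fin (m+2) → A, t ⟨i, by omega⟩ (OddPair m x) = t ⟨i+1, by omega⟩ (OddPair m x))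
    (hB4 : ∀ x : Fin (m+2) → A, t (Fin.last (k+1)) x = x (Fin.last (m+1)))
    (α : A → A → Prop)
    (hαrefl : ∀ a, α a a) (hαsymm : ∀ a b, α a b → α b a)
    (hαcompat : ∀ i, CompatV (t i) α)
    (R : A → A → Prop) (S : Fin (ℓ+1) → A → A → Prop)
    (hRrefl : ∀ a, R a a)
    (hSrefl : ∀ q a, S q a a) (hScompat : ∀ q i, CompatV (t i) (S q))
    (hR : R = FamComp (ℓ+1) S)
    (Θ : A → A → Prop) (hΘ : Θ = FamComp (ℓ+1) (fun q => InterRel α (S q))) :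
    ∀ a c, InterRel α (AltComp R (Conv R) m) a c → AltComp Θ (Conv Θ) k a c := by
  rintro a c ⟨hac, hRm⟩
  obtain ⟨Z, hEO, hE₀, hO₀, hE₁, hO₁⟩ := exists_evenPair_rel_oddPair hRrefl hRm
  have hΘEO : ∀ i, Θ (t i (EvenPair m Z)) (t i (OddPair m Z)) := fun i =>
    hΘ ▸ famComp_interRel_apply hαrefl hαsymm (hαcompat i) hSrefl (hScompat · i) (hB2 i)
      Fin.last_pos.ne hac hE₀ hE₁ hO₀ hO₁ (fun j => hR ▸ hEO j)
  have hzigzag := altComp_conv_of_zigzag Θ _ _ hΘEO (fun i h2 => hB3even i i.is_le h2 Z)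
    (fun i h2 => hB3odd i i.is_le h2 Z) (by rw [hB4, hB4, hE₁, hO₁])
  rwa [hB1, hB4, hE₀, hE₁] at hzigzag
end

section
/- Let A be a set, let m, k ≥ 1 be integers, and let t_0,…,t_{k+1} : A^{m+2} → A be operations satisfying the Jónsson-type condition (B). Let α be a tolerance with respect to the operations t_0,…,t_{k+1}, and let β and γ be congruences with respect to these operations. Then α ∩ (β ∘_{m+1} γ) ⊆ (α ∩ β) ∘_{k+1} (α ∩ γ). -/
theorem altChain {A : Type*} : ∀ (n : ℕ) (R S : A → A → Prop) (a c : A), AltComp R S n a c →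
    ∃ x : ℕ → A, x 0 = a ∧ x n = c ∧ ∀ j, j < n →
      (j % 2 = 0 → R (x j) (x (j+1))) ∧ (j % 2 = 1 → S (x j) (x (j+1))) := by
  intro n
  induction n using Nat.strong_induction_on with
  | _ n ih =>
    match n with
    | 0 =>
      intro R S a c h
      exact ⟨fun _ => a, rfl, (show a = c from h) ▸ rfl, by omega⟩
    | 1 =>
      intro R S a c h
      refine ⟨fun j => if j = 0 then a else c, rfl, rfl, ?_⟩
      intro j hj
      have hj0 : j = 0 := by omega
      subst hj0
      exact ⟨fun _ => by simpa using (show R a c from h), fun h1 => by omega⟩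
    | (n+2) =>
      intro R S a c h
      obtain ⟨b, hab, hrest⟩ := h
      obtain ⟨y, hy0, hyn, hylinks⟩ := ih (n+1) (by omega) S R b c hrest
      refine ⟨fun j => match j with | 0 => a | (j+1) => y j, rfl, hyn, ?_⟩
      intro j hj
      match j with
      | 0 =>
        refine ⟨fun _ => ?_, fun h1 => by omega⟩
        simpa [hy0] using hab
      | (j+1) =>
        constructor
        · intro he
          exact (hylinks j (by omega)).2 (by omega)
        · intro ho
          exact (hylinks j (by omega)).1 (by omega)

theorem chainAlt {A : Type*} : ∀ (n : ℕ) (R S : A → A → Prop) (x : ℕ → A),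
    (∀ j, j < n → (j % 2 = 0 → R (x j) (x (j+1))) ∧ (j % 2 = 1 → S (x j) (x (j+1)))) →
    AltComp R S n (x 0) (x n) := by
  intro n
  induction n using Nat.strong_induction_on with
  | _ n ih =>
    match n with
    | 0 => intro R S x _; exact rfl
    | 1 => intro R S x h; exact (h 0 (by omega)).1 rfl
    | (n+2) =>
      intro R S x h
      refine ⟨x 1, (h 0 (by omega)).1 rfl, ?_⟩
      have := ih (n+1) (by omega) S R (fun j => x (j+1)) ?_
      · exact this
      · intro j hj
        exact ⟨fun he => (h (j+1) (by omega)).2 (by omega),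
               fun ho => (h (j+1) (by omega)).1 (by omega)⟩

theorem stmt1 {A : Type*} (m k : ℕ) (hm : 1 ≤ m) (hk : 1 ≤ k)
    (t : Fin (k+2) → (Fin (m+2) → A) → A)
    (hB1 : ∀ x : Fin (m+2) → A, t 0 x = x 0)
    (hB2 : ∀ (i : Fin (k+2)) (x : Fin (m+2) → A), x (Fin.last (m+1)) = x 0 → t i x = x 0)
    (hB3even : ∀ (i : ℕ) (hi : i ≤ k), i % 2 = 0 →
      ∀ x : Fin (m+2) → A, t ⟨i, by omega⟩ (EvenPair m x) = t ⟨i+1, by omega⟩ (EvenPair m x))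
    (hB3odd : ∀ (i : ℕ) (hi : i ≤ k), i % 2 = 1 →
      ∀ x : Fin (m+2) → A, t ⟨i, by omega⟩ (OddPair m x) = t ⟨i+1, by omega⟩ (OddPair m x))
    (hB4 : ∀ x : Fin (m+2) → A, t (Fin.last (k+1)) x = x (Fin.last (m+1)))
    (α β γ : A → A → Prop)
    (hαrefl : ∀ a, α a a) (hαsymm : ∀ a b, α a b → α b a)
    (hαcompat : ∀ i, CompatV (t i) α)
    (hβ : Equivalence β) (hβcompat : ∀ i, CompatV (t i) β)
    (hγ : Equivalence γ) (hγcompat : ∀ i, CompatV (t i) γ) :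
    ∀ a c, InterRel α (AltComp β γ (m+1)) a c →
      AltComp (InterRel α β) (InterRel α γ) (k+1) a c := by
  intro a c ⟨hac, hcomp⟩
  obtain ⟨x, hx0, hxm, hlinks⟩ := altChain (m+1) β γ a c hcomp
  -- the chain as a Fin-vector
  set X : Fin (m+2) → A := fun j => x j.val with hX
  have hX0 : X 0 = a := by
    show x (0 : Fin (m+2)).val = a
    rw [Fin.val_zero]; exact hx0
  have hXlast : X (Fin.last (m+1)) = c := by
    show x (Fin.last (m+1)).val = c
    rw [Fin.val_last]; exact hxm
  have h0ne : (0 : Fin (m+2)) ≠ Fin.last (m+1) := by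
    simp only [ne_eq, Fin.ext_iff, Fin.val_zero, Fin.val_last]
    omega
  -- α relates a and c to every t i X
  have hα1 : ∀ i' : Fin (k+2), α a (t i' X) := by
    intro i'
    set Y : Fin (m+2) → A := fun j => if j = Fin.last (m+1) then X 0 else X j with hY
    have hYlast : Y (Fin.last (m+1)) = Y 0 := by simp [hY, h0ne.symm]
    have hYt : t i' Y = a := by
      rw [hB2 i' Y hYlast]
      show (if (0 : Fin (m+2)) = Fin.last (m+1) then X 0 else X 0) = a
      rw [if_neg h0ne]; exact hX0
    have hpt : ∀ j, α (Y j) (X j) := by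
      intro j
      by_cases hj : j = Fin.last (m+1)
      · subst hj
        simp only [hY, if_pos rfl]
        rw [hX0, hXlast]; exact hac
      · simp only [hY, if_neg hj]; exact hαrefl _
    have := hαcompat i' Y X hpt
    rwa [hYt] at this
  have hα2 : ∀ i' : Fin (k+2), α c (t i' X) := by
    intro i'
    set Y : Fin (m+2) → A := fun j => if j = 0 then X (Fin.last (m+1)) else X j with hY
    have hYlast : Y (Fin.last (m+1)) = Y 0 := by simp [hY, h0ne.symm]
    have hYt : t i' Y = c := by
      rw [hB2 i' Y hYlast]
      show (if (0 : Fin (m+2)) = 0 then X (Fin.last (m+1)) else X 0) = c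
      rw [if_pos rfl]; exact hXlast
    have hpt : ∀ j, α (Y j) (X j) := by
      intro j
      by_cases hj : j = 0
      · subst hj
        simp only [hY, if_pos rfl]
        rw [hX0, hXlast]; exact hαsymm _ _ hac
      · simp only [hY, if_neg hj]; exact hαrefl _
    have := hαcompat i' Y X hpt
    rwa [hYt] at this
  -- α relates any two t i X, t i' X
  have hαlink : ∀ i0 i1 : Fin (k+2), α (t i0 X) (t i1 X) := by
    intro i0 i1
    set W : Fin (m+2) → A :=
      fun j => if j = 0 then t i1 X else if j = Fin.last (m+1) then t i1 X else X j with hW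
    have hWlast : W (Fin.last (m+1)) = W 0 := by
      simp [hW, h0ne.symm]
    have hWt : t i0 W = t i1 X := by
      rw [hB2 i0 W hWlast]
      show (if (0 : Fin (m+2)) = 0 then t i1 X else _) = t i1 X
      rw [if_pos rfl]
    have hpt : ∀ j, α (X j) (W j) := by
      intro j
      by_cases hj0 : j = 0
      · subst hj0
        simp only [hW, if_pos rfl]
        rw [hX0]; exact hα1 i1
      · by_cases hjl : j = Fin.last (m+1)
        · subst hjl
          simp only [hW, if_neg h0ne.symm, if_pos rfl]
          · rw [hXlast]; exact hα2 i1
        · simp only [hW, if_neg hj0, if_neg hjl]; exact hαrefl _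
    have := hαcompat i0 X W hpt
    rwa [hWt] at this
  -- β relates X pointwise to EvenPair X
  have hEP : ∀ j : Fin (m+2), β (X j) (EvenPair m X j) := by
    intro j
    show β (x j.val) (x (2 * (j.val / 2)))
    by_cases h2 : j.val % 2 = 0
    · have : 2 * (j.val / 2) = j.val := by omega
      rw [this]; exact hβ.refl _
    · have he : 2 * (j.val / 2) = j.val - 1 := by omega
      rw [he]
      have hlt : j.val - 1 < m + 1 := by have := j.isLt; omega
      have := (hlinks (j.val - 1) hlt).1 (by omega)
      have hj1 : j.val - 1 + 1 = j.val := by omega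
      rw [hj1] at this
      exact hβ.symm this
  have hOP : ∀ j : Fin (m+2), γ (X j) (OddPair m X j) := by
    intro j
    show γ (x j.val) (x (2 * ((j.val + 1) / 2) - 1))
    by_cases h2 : j.val % 2 = 1
    · have : 2 * ((j.val + 1) / 2) - 1 = j.val := by omega
      rw [this]; exact hγ.refl _
    · by_cases hj0 : j.val = 0
      · have : 2 * ((j.val + 1) / 2) - 1 = j.val := by omega
        rw [this]; exact hγ.refl _
      · have he : 2 * ((j.val + 1) / 2) - 1 = j.val - 1 := by omega
        rw [he]
        have hlt : j.val - 1 < m + 1 := by have := j.isLt; omega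
        have := (hlinks (j.val - 1) hlt).2 (by omega)
        have hj1 : j.val - 1 + 1 = j.val := by omega
        rw [hj1] at this
        exact hγ.symm this
  -- the witness chain
  set d : ℕ → A := fun i => t ⟨min i (k+1), by omega⟩ X with hd
  have hd0 : d 0 = a := by
    show t ⟨min 0 (k+1), _⟩ X = a
    have : (⟨min 0 (k+1), by omega⟩ : Fin (k+2)) = 0 := by
      apply Fin.ext; simp
    rw [this, hB1, hX0]
  have hdK : d (k+1) = c := by
    show t ⟨min (k+1) (k+1), _⟩ X = c
    have : (⟨min (k+1) (k+1), by omega⟩ : Fin (k+2)) = Fin.last (k+1) := by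
      apply Fin.ext; simp [Fin.val_last]
    rw [this, hB4, hXlast]
  have hdlinks : ∀ i, i < k + 1 →
      (i % 2 = 0 → InterRel α β (d i) (d (i+1))) ∧
      (i % 2 = 1 → InterRel α γ (d i) (d (i+1))) := by
    intro i hi
    have hik : i ≤ k := by omega
    have hdi : d i = t ⟨i, by omega⟩ X := by
      show t ⟨min i (k+1), _⟩ X = _
      have : (⟨min i (k+1), by omega⟩ : Fin (k+2)) = ⟨i, by omega⟩ := by
        apply Fin.ext; simp; omega
      rw [this]
    have hdi1 : d (i+1) = t ⟨i+1, by omega⟩ X := by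
      show t ⟨min (i+1) (k+1), _⟩ X = _
      have : (⟨min (i+1) (k+1), by omega⟩ : Fin (k+2)) = ⟨i+1, by omega⟩ := by
        apply Fin.ext; simp; omega
      rw [this]
    rw [hdi, hdi1]
    constructor
    · intro heven
      refine ⟨hαlink _ _, ?_⟩
      have h1 : β (t ⟨i, by omega⟩ X) (t ⟨i, by omega⟩ (EvenPair m X)) :=
        hβcompat _ X (EvenPair m X) hEP
      have h2 : t (⟨i, by omega⟩ : Fin (k+2)) (EvenPair m X)
          = t ⟨i+1, by omega⟩ (EvenPair m X) := hB3even i hik heven X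
      have h3 : β (t ⟨i+1, by omega⟩ X) (t ⟨i+1, by omega⟩ (EvenPair m X)) :=
        hβcompat _ X (EvenPair m X) hEP
      exact hβ.trans (h2 ▸ h1) (hβ.symm h3)
    · intro hodd
      refine ⟨hαlink _ _, ?_⟩
      have h1 : γ (t ⟨i, by omega⟩ X) (t ⟨i, by omega⟩ (OddPair m X)) :=
        hγcompat _ X (OddPair m X) hOP
      have h2 : t (⟨i, by omega⟩ : Fin (k+2)) (OddPair m X)
          = t ⟨i+1, by omega⟩ (OddPair m X) := hB3odd i hik hodd X
      have h3 : γ (t ⟨i+1, by omega⟩ X) (t ⟨i+1, by omega⟩ (OddPair m X)) :=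
        hγcompat _ X (OddPair m X) hOP
      exact hγ.trans (h2 ▸ h1) (hγ.symm h3)
  have := chainAlt (k+1) (InterRel α β) (InterRel α γ) d hdlinks
  rwa [hd0, hdK] at this
end

section
/- Let β and γ be equivalence relations on a set A, let ℓ ≥ 1 and m ≥ 1 be integers, and let R = β ∘_{ℓ+1} γ (the alternating composition of β and γ with ℓ+1 factors, beginning with β). Then R ∘_m R^⌣ (the alternating composition of R and R^⌣ with m factors, beginning with R) equals β ∘_{mℓ+1} γ. -/
section Aux

variable {A : Type*}

/-- `pk n R S` is `R` if `n` is even, `S` otherwise. -/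
def pk (n : ℕ) (R S : A → A → Prop) : A → A → Prop := if n % 2 = 0 then R else S

lemma pk_succ (n : ℕ) (R S : A → A → Prop) : pk (n+1) R S = pk n S R := by
  rcases Nat.mod_two_eq_zero_or_one n with h | h <;> simp [pk, h, Nat.add_mod]

lemma comp_assoc (R S T : A → A → Prop) : Comp (Comp R S) T = Comp R (Comp S T) := by
  funext a d
  apply propext
  constructor
  · rintro ⟨c, ⟨b, hab, hbc⟩, hcd⟩; exact ⟨b, hab, c, hbc, hcd⟩
  · rintro ⟨b, hab, c, hbc, hcd⟩; exact ⟨c, ⟨b, hab, hbc⟩, hcd⟩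

lemma comp_self {β : A → A → Prop} (hβ : Equivalence β) : Comp β β = β := by
  funext a c
  apply propext
  exact ⟨fun ⟨b, h1, h2⟩ => hβ.trans h1 h2, fun h => ⟨a, hβ.refl a, h⟩⟩

lemma comp_absorb {β : A → A → Prop} (hβ : Equivalence β) (T : A → A → Prop) :
    Comp β (Comp β T) = Comp β T := by
  funext a c
  apply propext
  constructor
  · rintro ⟨b, hab, b', hbb', h⟩; exact ⟨b', hβ.trans hab hbb', h⟩
  · rintro ⟨b, hab, h⟩; exact ⟨a, hβ.refl a, b, hab, h⟩

lemma conv_comp (R S : A → A → Prop) : Conv (Comp R S) = Comp (Conv S) (Conv R) := by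
  funext a c
  apply propext
  constructor
  · rintro ⟨b, h1, h2⟩; exact ⟨b, h2, h1⟩
  · rintro ⟨b, h1, h2⟩; exact ⟨b, h2, h1⟩

lemma conv_symm {β : A → A → Prop} (hβ : Equivalence β) : Conv β = β := by
  funext a b
  exact propext ⟨fun h => hβ.symm h, fun h => hβ.symm h⟩

lemma altcomp_snoc (n : ℕ) : ∀ (R S : A → A → Prop),
    AltComp R S (n+2) = Comp (AltComp R S (n+1)) (pk n S R) := by
  induction n with
  | zero =>
    intro R S
    show Comp R (AltComp S R 1) = Comp (AltComp R S 1) (pk 0 S R)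
    rfl
  | succ n ih =>
    intro R S
    have e : AltComp R S (n+3) = Comp R (AltComp S R (n+2)) := rfl
    rw [e, ih S R, ← comp_assoc, pk_succ]
    rfl

lemma conv_alt : ∀ (n : ℕ) (β γ : A → A → Prop), Equivalence β → Equivalence γ →
    Conv (AltComp β γ (n+1)) = AltComp (pk n β γ) (pk n γ β) (n+1) := by
  intro n
  induction n with
  | zero =>
    intro β γ hβ hγ
    exact conv_symm hβ
  | succ n ih =>
    intro β γ hβ hγ
    have hc : Conv (pk n γ β) = pk n γ β := by
      rcases Nat.mod_two_eq_zero_or_one n with h | h <;>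
        simp [pk, h, conv_symm hγ, conv_symm hβ]
    rw [altcomp_snoc n β γ, conv_comp, hc, ih β γ hβ hγ, pk_succ, pk_succ]
    rfl

lemma glue : ∀ (n : ℕ) (β γ : A → A → Prop), Equivalence β → Equivalence γ → ∀ k,
    Comp (AltComp β γ (n+1)) (AltComp (pk n β γ) (pk n γ β) (k+1)) =
      AltComp β γ (n+k+1) := by
  intro n
  induction n with
  | zero =>
    intro β γ hβ hγ k
    rw [show (0:ℕ)+k+1 = k+1 from by omega]
    show Comp β (AltComp β γ (k+1)) = AltComp β γ (k+1)
    cases k with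
    | zero => exact comp_self hβ
    | succ k =>
      show Comp β (Comp β (AltComp γ β (k+1))) = Comp β (AltComp γ β (k+1))
      exact comp_absorb hβ _
  | succ n ih =>
    intro β γ hβ hγ k
    rw [pk_succ, pk_succ]
    show Comp (Comp β (AltComp γ β (n+1))) (AltComp (pk n γ β) (pk n β γ) (k+1)) = _
    rw [comp_assoc, ih γ β hγ hβ k, show n+1+k+1 = (n+k+1)+1 from by omega]
    rfl

end Aux

theorem stmt3 {A : Type*} (β γ : A → A → Prop)
    (hβ : Equivalence β) (hγ : Equivalence γ)
    (ℓ m : ℕ) (hℓ : 1 ≤ ℓ) (hm : 1 ≤ m)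
    (R : A → A → Prop) (hR : R = AltComp β γ (ℓ + 1)) :
    AltComp R (Conv R) m = AltComp β γ (m * ℓ + 1) := by
  subst hR
  have hX : Equivalence (pk ℓ β γ) := by unfold pk; split <;> assumption
  have hY : Equivalence (pk ℓ γ β) := by unfold pk; split <;> assumption
  have h1 : pk ℓ (pk ℓ β γ) (pk ℓ γ β) = β ∧ pk ℓ (pk ℓ γ β) (pk ℓ β γ) = γ := by
    rcases Nat.mod_two_eq_zero_or_one ℓ with h | h <;> simp [pk, h]
  have hconv : Conv (AltComp β γ (ℓ+1)) = AltComp (pk ℓ β γ) (pk ℓ γ β) (ℓ+1) :=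
    conv_alt ℓ β γ hβ hγ
  have glueR : ∀ k, Comp (AltComp β γ (ℓ+1)) (AltComp (pk ℓ β γ) (pk ℓ γ β) (k+1)) =
      AltComp β γ (ℓ+k+1) := glue ℓ β γ hβ hγ
  have glueR' : ∀ k, Comp (AltComp (pk ℓ β γ) (pk ℓ γ β) (ℓ+1)) (AltComp β γ (k+1)) =
      AltComp (pk ℓ β γ) (pk ℓ γ β) (ℓ+k+1) := by
    intro k
    have := glue ℓ (pk ℓ β γ) (pk ℓ γ β) hX hY k
    rwa [h1.1, h1.2] at this
  have P : ∀ j,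
      AltComp (AltComp β γ (ℓ+1)) (Conv (AltComp β γ (ℓ+1))) (j+1) =
        AltComp β γ ((j+1)*ℓ+1) ∧
      AltComp (AltComp β γ (ℓ+1)) (Conv (AltComp β γ (ℓ+1))) (j+2) =
        AltComp β γ ((j+2)*ℓ+1) := by
    intro j
    induction j with
    | zero =>
      constructor
      · show AltComp β γ (ℓ+1) = AltComp β γ (1*ℓ+1)
        rw [show 1*ℓ+1 = ℓ+1 from by omega]
      · show Comp (AltComp β γ (ℓ+1)) (AltComp (Conv (AltComp β γ (ℓ+1))) (AltComp β γ (ℓ+1)) 1)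
            = AltComp β γ (2*ℓ+1)
        show Comp (AltComp β γ (ℓ+1)) (Conv (AltComp β γ (ℓ+1))) = AltComp β γ (2*ℓ+1)
        rw [hconv, glueR ℓ, show ℓ+ℓ+1 = 2*ℓ+1 from by omega]
    | succ j ih =>
      refine ⟨ih.2, ?_⟩
      show Comp (AltComp β γ (ℓ+1))
          (AltComp (Conv (AltComp β γ (ℓ+1))) (AltComp β γ (ℓ+1)) (j+2)) = _
      have e1 : AltComp (Conv (AltComp β γ (ℓ+1))) (AltComp β γ (ℓ+1)) (j+2) =
          Comp (Conv (AltComp β γ (ℓ+1)))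
            (AltComp (AltComp β γ (ℓ+1)) (Conv (AltComp β γ (ℓ+1))) (j+1)) := rfl
      rw [e1, ih.1, hconv, glueR' ((j+1)*ℓ), glueR (ℓ + (j+1)*ℓ)]
      congr 1
      ring
  obtain ⟨j, rfl⟩ : ∃ j, m = j + 1 := ⟨m - 1, by omega⟩
  exact (P j).1
end

section
/- Let A be a set and let p, j : A³ → A be operations satisfying the identities p(x,y,y) = x, p(x,x,y) = j(x,x,y), j(x,y,y) = y, and j(x,y,x) = x for all x, y in A. Let α, β, γ be congruences with respect to p and j. Then (α ∩ (β ∘ γ)) ∘ (α ∩ β) = (α ∩ β) ∘ (α ∩ (γ ∘ β)). -/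
lemma key_incl {A : Type*}
    (p j : A → A → A → A)
    (hp1 : ∀ x y, p x y y = x) (hpj : ∀ x y, p x x y = j x x y)
    (hj1 : ∀ x y, j x y y = y) (hj2 : ∀ x y, j x y x = x)
    (α β γ : A → A → Prop)
    (hα : Equivalence α) (hαp : Compat3 p α) (hαj : Compat3 j α)
    (hβ : Equivalence β) (hβp : Compat3 p β) (hβj : Compat3 j β)
    (hγ : Equivalence γ) (hγp : Compat3 p γ) (hγj : Compat3 j γ)
    {a c : A} (h : Comp (InterRel α (Comp β γ)) (InterRel α β) a c) :
    Comp (InterRel α β) (InterRel α (Comp γ β)) a c := by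
  obtain ⟨b, ⟨hab_α, u, hau_β, hub_γ⟩, hbc_α, hbc_β⟩ := h
  refine ⟨j b u a, ⟨?_, ?_⟩, ?_, p b u a, ?_, ?_⟩
  · -- a α j b u a
    have h1 : α (j a u a) (j b u a) := hαj _ _ _ _ _ _ hab_α (hα.refl u) (hα.refl a)
    rw [hj2] at h1; exact h1
  · -- a β j b u a
    have h1 : β (j b a a) (j b u a) := hβj _ _ _ _ _ _ (hβ.refl b) hau_β (hβ.refl a)
    rw [hj1] at h1; exact h1
  · -- j b u a α c
    have h1 : α (j b u a) (j a u a) :=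
      hαj _ _ _ _ _ _ (hα.symm hab_α) (hα.refl u) (hα.refl a)
    rw [hj2] at h1
    exact hα.trans h1 (hα.trans hab_α hbc_α)
  · -- j b u a γ p b u a
    have h1 : γ (j b u a) (j b b a) := hγj _ _ _ _ _ _ (hγ.refl b) hub_γ (hγ.refl a)
    have h2 : γ (p b u a) (p b b a) := hγp _ _ _ _ _ _ (hγ.refl b) hub_γ (hγ.refl a)
    rw [hpj] at h2
    exact hγ.trans h1 (hγ.symm h2)
  · -- p b u a β c
    have h1 : β (p b u a) (p c a a) := hβp _ _ _ _ _ _ hbc_β (hβ.symm hau_β) (hβ.refl a)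
    rw [hp1] at h1; exact h1

theorem stmt4 {A : Type*}
    (p j : A → A → A → A)
    (hp1 : ∀ x y, p x y y = x) (hpj : ∀ x y, p x x y = j x x y)
    (hj1 : ∀ x y, j x y y = y) (hj2 : ∀ x y, j x y x = x)
    (α β γ : A → A → Prop)
    (hα : Equivalence α) (hαp : Compat3 p α) (hαj : Compat3 j α)
    (hβ : Equivalence β) (hβp : Compat3 p β) (hβj : Compat3 j β)
    (hγ : Equivalence γ) (hγp : Compat3 p γ) (hγj : Compat3 j γ) :
    Comp (InterRel α (Comp β γ)) (InterRel α β) =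
      Comp (InterRel α β) (InterRel α (Comp γ β)) := by
  funext a c
  apply propext
  constructor
  · exact key_incl p j hp1 hpj hj1 hj2 α β γ hα hαp hαj hβ hβp hβj hγ hγp hγj
  · rintro ⟨b, ⟨hab_α, hab_β⟩, hbc_α, v, hbv_γ, hvc_β⟩
    have h : Comp (InterRel α (Comp β γ)) (InterRel α β) c a :=
      ⟨b, ⟨hα.symm hbc_α, v, hβ.symm hvc_β, hγ.symm hbv_γ⟩, hα.symm hab_α, hβ.symm hab_β⟩
    obtain ⟨d, ⟨hcd_α, hcd_β⟩, hda_α, w, hdw_γ, hwa_β⟩ :=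
      key_incl p j hp1 hpj hj1 hj2 α β γ hα hαp hαj hβ hβp hβj hγ hγp hγj h
    exact ⟨d, ⟨hα.symm hda_α, w, hβ.symm hwa_β, hγ.symm hdw_γ⟩, hα.symm hcd_α, hβ.symm hcd_β⟩
end

section
/- Let A be a set and let p, j : A³ → A be operations satisfying the identities p(x,y,y) = x, p(x,x,y) = j(x,x,y), j(x,y,y) = y, and j(x,y,x) = x for all x, y in A. Let α, β, γ be congruences with respect to p and j. Then (α ∩ (β ∘ γ ∘ β)) ∘ (α ∩ γ) = (α ∩ (β ∘ γ)) ∘ (α ∩ β) ∘ (α ∩ γ). -/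
theorem stmt5 {A : Type*}
    (p j : A → A → A → A)
    (hp1 : ∀ x y, p x y y = x) (hpj : ∀ x y, p x x y = j x x y)
    (hj1 : ∀ x y, j x y y = y) (hj2 : ∀ x y, j x y x = x)
    (α β γ : A → A → Prop)
    (hα : Equivalence α) (hαp : Compat3 p α) (hαj : Compat3 j α)
    (hβ : Equivalence β) (hβp : Compat3 p β) (hβj : Compat3 j β)
    (hγ : Equivalence γ) (hγp : Compat3 p γ) (hγj : Compat3 j γ) :
    Comp (InterRel α (Comp β (Comp γ β))) (InterRel α γ) =
      Comp (InterRel α (Comp β γ)) (Comp (InterRel α β) (InterRel α γ)) := by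
  funext a d
  apply propext
  constructor
  · rintro ⟨w, ⟨haw, x, hax, y, hxy, hyw⟩, hwd_a, hwd_g⟩
    -- witnesses
    set m := j x w a with hm
    set n := j y w a with hn
    set q := p w y x with hq
    have hwa : α w a := hα.symm haw
    -- α facts
    have hma : α m a := by
      have := hαj x x w a a a (hα.refl x) hwa (hα.refl a)
      rw [hj1 x a] at this; exact this
    have hna : α n a := by
      have := hαj y y w a a a (hα.refl y) hwa (hα.refl a)
      rw [hj1 y a] at this; exact this
    have hba : α (j m n w) a := by
      have := hαj m a n a w a hma hna hwa
      rw [hj1 a a] at this; exact this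
    -- β facts
    have hmx : β m x := by
      have := hβj x x w w a x (hβ.refl x) (hβ.refl w) hax
      rw [hj2 x w] at this; exact this
    have hma_b : β m a := hβ.trans hmx (hβ.symm hax)
    have hnp : β n (p w w x) := by
      have := hβj y w w w a x hyw (hβ.refl w) hax
      rw [← hpj w x] at this; exact this
    have hqp : β q (p w w x) := by
      exact hβp w w y w x x (hβ.refl w) hyw (hβ.refl x)
    have hnq : β n q := hβ.trans hnp (hβ.symm hqp)
    have hau : β a (p m n q) := by
      have := hβp m a n n q n hma_b (hβ.refl n) (hβ.symm hnq)
      rw [hp1 a n] at this; exact hβ.symm this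
    -- γ facts
    have hmn : γ m n := hγj x y w w a a hxy (hγ.refl w) (hγ.refl a)
    have hqw : γ q w := by
      have := hγp w w y x x x (hγ.refl w) (hγ.symm hxy) (hγ.refl x)
      rw [hp1 w x] at this; exact this
    have hub : γ (p m n q) (j m n w) := by
      have h1 : γ (p m n q) (p m m w) :=
        hγp m m n m q w (hγ.refl m) (hγ.symm hmn) hqw
      rw [hpj m w] at h1
      have h2 : γ (j m n w) (j m m w) :=
        hγj m m n m w w (hγ.refl m) (hγ.symm hmn) (hγ.refl w)
      exact hγ.trans h1 (hγ.symm h2)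
    -- e facts
    have hbe : β (j m n w) (j a q w) := hβj m a n q w w hma_b hnq (hβ.refl w)
    have hea : α (j a q w) a := by
      have := hαj a a q q w a (hα.refl a) (hα.refl q) hwa
      rw [hj2 a q] at this; exact this
    have heg : γ (j a q w) w := by
      have := hγj a a q w w w (hγ.refl a) hqw (hγ.refl w)
      rw [hj1 a w] at this; exact this
    refine ⟨j m n w, ⟨hα.symm hba, p m n q, hau, hub⟩,
      j a q w, ⟨hα.trans hba (hα.symm hea), hbe⟩,
      ⟨hα.trans hea (hα.trans haw hwd_a), hγ.trans heg hwd_g⟩⟩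
  · rintro ⟨b, ⟨hab, u, hau, hub⟩, e, ⟨hbe_a, hbe_b⟩, hed_a, hed_g⟩
    exact ⟨e, ⟨hα.trans hab hbe_a, u, hau, b, hub, hbe_b⟩, hed_a, hed_g⟩
end

section
/- Let A be a set and let p, j : A³ → A be operations satisfying the identities p(x,y,y) = x, p(x,x,y) = j(x,x,y), j(x,y,y) = y, and j(x,y,x) = x for all x, y in A. Let α be a congruence with respect to p and j, and let R, S, T be reflexive relations on A compatible with p and j such that R ⊆ T and S ⊆ T^⌣. Then α ∩ (T ∘ T^⌣ ∘ R ∘ S) = (α ∩ (T ∘ T^⌣)) ∘ (α ∩ R) ∘ (α ∩ S). -/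
theorem stmt7 {A : Type*}
    (p j : A → A → A → A)
    (hp1 : ∀ x y, p x y y = x) (hpj : ∀ x y, p x x y = j x x y)
    (hj1 : ∀ x y, j x y y = y) (hj2 : ∀ x y, j x y x = x)
    (α : A → A → Prop)
    (hα : Equivalence α) (hαp : Compat3 p α) (hαj : Compat3 j α)
    (R S T : A → A → Prop)
    (hRrefl : ∀ a, R a a) (hRp : Compat3 p R) (hRj : Compat3 j R)
    (hSrefl : ∀ a, S a a) (hSp : Compat3 p S) (hSj : Compat3 j S)
    (hTrefl : ∀ a, T a a) (hTp : Compat3 p T) (hTj : Compat3 j T)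
    (hRT : ∀ a b, R a b → T a b) (hST : ∀ a b, S a b → Conv T a b) :
    InterRel α (Comp T (Comp (Conv T) (Comp R S))) =
      Comp (InterRel α (Comp T (Conv T))) (Comp (InterRel α R) (InterRel α S)) := by
  funext a e
  apply propext
  unfold InterRel Comp Conv
  constructor
  · rintro ⟨hae, b, hab, c, hcb, d, hcd, hde⟩
    have hxa : α a (j a c e) := by
      have := hαj a a c c a e (hα.refl a) (hα.refl c) hae
      rwa [hj2] at this
    have hya : α a (j a d e) := by
      have := hαj a a d d a e (hα.refl a) (hα.refl d) hae
      rwa [hj2] at this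
    refine ⟨j a c e, ⟨hxa, p b b d, ?_, ?_⟩, j a d e, ⟨hα.trans (hα.symm hxa) hya, ?_⟩,
      hα.trans (hα.symm hya) hae, ?_⟩
    · -- a T (p b b d)
      have := hTp a b c b c d hab hcb (hRT _ _ hcd)
      rwa [hp1] at this
    · -- (j a c e) T (p b b d)
      have := hTj a b c b e d hab hcb (hST _ _ hde)
      rwa [← hpj] at this
    · -- (j a c e) R (j a d e)
      exact hRj a a c d e e (hRrefl a) hcd (hRrefl e)
    · -- (j a d e) S e
      have := hSj a a d e e e (hSrefl a) hde (hSrefl e)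
      rwa [hj1] at this
  · rintro ⟨x, ⟨hax, m, ham, hxm⟩, y, ⟨hxy, hRxy⟩, hye, hSye⟩
    exact ⟨hα.trans hax (hα.trans hxy hye), m, ham, x, hxm, y, hRxy, hSye⟩
end

section
/- Let A be a set and let t_0, t_1, t_2, t_3 : A³ → A be operations witnessing 3-distributivity, that is, satisfying for all elements of A: t_0(x,y,z) = x; t_i(x,y,x) = x for 0 ≤ i ≤ 3; t_0(x,x,z) = t_1(x,x,z); t_1(x,z,z) = t_2(x,z,z); t_2(x,x,z) = t_3(x,x,z); t_3(x,y,z) = z. Let α, β, γ be congruences with respect to t_0, t_1, t_2, t_3. Then (α ∩ (β ∘ γ ∘ β)) ∘ (α ∩ γ) = (α ∩ β) ∘ (α ∩ γ) ∘ (α ∩ β) ∘ (α ∩ γ). -/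
theorem stmt9 {A : Type*}
    (t0 t1 t2 t3 : A → A → A → A)
    (h0 : ∀ x y z, t0 x y z = x)
    (hmid0 : ∀ x y, t0 x y x = x) (hmid1 : ∀ x y, t1 x y x = x)
    (hmid2 : ∀ x y, t2 x y x = x) (hmid3 : ∀ x y, t3 x y x = x)
    (h01 : ∀ x z, t0 x x z = t1 x x z)
    (h12 : ∀ x z, t1 x z z = t2 x z z)
    (h23 : ∀ x z, t2 x x z = t3 x x z)
    (h3 : ∀ x y z, t3 x y z = z)
    (α β γ : A → A → Prop)
    (hα : Equivalence α)
    (hα0 : Compat3 t0 α) (hα1 : Compat3 t1 α) (hα2 : Compat3 t2 α) (hα3 : Compat3 t3 α)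
    (hβ : Equivalence β)
    (hβ0 : Compat3 t0 β) (hβ1 : Compat3 t1 β) (hβ2 : Compat3 t2 β) (hβ3 : Compat3 t3 β)
    (hγ : Equivalence γ)
    (hγ0 : Compat3 t0 γ) (hγ1 : Compat3 t1 γ) (hγ2 : Compat3 t2 γ) (hγ3 : Compat3 t3 γ) :
    Comp (InterRel α (Comp β (Comp γ β))) (InterRel α γ) =
      Comp (InterRel α β) (Comp (InterRel α γ) (Comp (InterRel α β) (InterRel α γ))) := by
  
  have hαr := hα.refl; have hβr := hβ.refl; have hγr := hγ.refl
  funext a e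
  apply propext
  constructor
  · rintro ⟨d, ⟨had, b, hab, c, hbc, hcd⟩, hdea, hdeg⟩
    -- witnesses
    set u := t1 a b d with hu
    set X := t2 b c d with hX
    set Y := t1 a c d with hY
    set Z := t1 a d d with hZ
    set v := t2 d X Y with hv
    set w := t1 d Y X with hw
    -- a (α∩β) u
    have haau : α a u := by
      have h := hα1 a a b b a d (hαr a) (hαr b) had
      rwa [hmid1] at h
    have habu : β a u := by
      have h := hβ1 a a a b d d (hβr a) hab (hβr d)
      rwa [← h01, h0] at h
    -- auxiliary facts
    have hXγd : γ X d := by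
      have h := hγ2 b c c c d d hbc (hγr c) (hγr d)
      rwa [h23, h3] at h
    have hYγu : γ Y u := hγ1 a a c b d d (hγr a) (hγ.symm hbc) (hγr d)
    have hYαa : α Y a := by
      have h := hα1 a a c c d a (hαr a) (hαr c) (hα.symm had)
      rwa [hmid1] at h
    have hYαd : α Y d := hα.trans hYαa had
    have hXγe : γ X e := by
      have h := hγ2 b c c c d e hbc (hγr c) hdeg
      rwa [h23, h3] at h
    have hXβZ : β X Z := by
      have h := hβ2 b a c d d d (hβ.symm hab) hcd (hβr d)
      rwa [← h12] at h
    have hYβZ : β Y Z := hβ1 a a c d d d (hβr a) hcd (hβr d)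
    -- u (α∩γ) v
    have huγv : γ u v := by
      have h := hγ2 d d d X u Y (hγr d) (hγ.symm hXγd) (hγ.symm hYγu)
      rwa [h23, h3] at h
    have hvαd : α v d := by
      have h := hα2 d d X X Y d (hαr d) (hαr X) hYαd
      rwa [hmid2] at h
    have huαv : α u v :=
      hα.trans (hα.trans (hα.symm haau) had) (hα.symm hvαd)
    -- v (α∩β) w
    have hvβw : β v w := by
      have h1 : β v (t2 d Z Z) := hβ2 d d X Z Y Z (hβr d) hXβZ hYβZ
      rw [← h12] at h1
      have h2 : β (t1 d Z Z) w := hβ1 d d Z Y Z X (hβr d) (hβ.symm hYβZ) (hβ.symm hXβZ)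
      exact hβ.trans h1 h2
    have hwαd : α w d := by
      have h := hα1 d d Y d X X (hαr d) hYαd (hαr X)
      rwa [← h01, h0] at h
    have hvαw : α v w := hα.trans hvαd (hα.symm hwαd)
    -- w (α∩γ) e
    have hwγe : γ w e := by
      have h := hγ1 d e Y Y X e hdeg (hγr Y) hXγe
      rwa [hmid1] at h
    have hwαe : α w e := hα.trans hwαd hdea
    exact ⟨u, ⟨haau, habu⟩, v, ⟨huαv, huγv⟩, w, ⟨hvαw, hvβw⟩, hwαe, hwγe⟩
  · rintro ⟨u, ⟨hau_a, hau_b⟩, v, ⟨huv_a, huv_g⟩, w, ⟨hvw_a, hvw_b⟩, hwe_a, hwe_g⟩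
    exact ⟨w, ⟨hα.trans (hα.trans hau_a huv_a) hvw_a, u, hau_b, v, huv_g, hvw_b⟩,
      hwe_a, hwe_g⟩
end

section
/- Let A be a set, k ≥ 1 an integer, and let d_0, d_1, …, d_k : A³ → A be directed Jónsson operations, that is, satisfying for all elements of A: d_0(x,y,z) = x; d_i(x,y,x) = x for 0 ≤ i ≤ k; d_i(x,z,z) = d_{i+1}(x,x,z) for 0 ≤ i < k; d_k(x,y,z) = z. Let ℓ ≥ 1 be an integer, let α be a tolerance with respect to d_0, …, d_k, and let S_1, …, S_ℓ be reflexive relations on A compatible with each d_i. Then α ∩ (S_1 ∘ S_2 ∘ ⋯ ∘ S_ℓ) ⊆ ((α ∩ S_1) ∘ (α ∩ S_2) ∘ ⋯ ∘ (α ∩ S_ℓ))^{k−1}. -/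
section Aux
variable {A : Type*}

/-- Key tolerance lemma: if `α` is reflexive, symmetric and compatible with `f`
and `f x y x = x`, then `α a c` implies `α (f a y c) (f a y' c)` for all `y y'`. -/
theorem key_tol (f : A → A → A → A) (hmid : ∀ x y, f x y x = x)
    (α : A → A → Prop) (hr : ∀ a, α a a) (hs : ∀ a b, α a b → α b a)
    (hc : Compat3 f α) {a c : A} (hac : α a c) (y y' : A) :
    α (f a y c) (f a y' c) := by
  have h1 : α (f a y' a) (f a y' c) := hc _ _ _ _ _ _ (hr a) (hr y') hac
  have h2 : α (f c y' c) (f a y' c) := hc _ _ _ _ _ _ (hs _ _ hac) (hr y') (hr c)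
  have h3 := hc _ _ _ _ _ _ h1 (hr y) h2
  rw [hmid a y', hmid c y', hmid (f a y' c) y] at h3
  exact h3

theorem block (f : A → A → A → A) (hmid : ∀ x y, f x y x = x)
    (α : A → A → Prop) (hr : ∀ a, α a a) (hs : ∀ a b, α a b → α b a)
    (hc : Compat3 f α) {a c : A} (hac : α a c) :
    ∀ (n : ℕ) (S : Fin n → A → A → Prop), (∀ q b, S q b b) → (∀ q, Compat3 f (S q)) →
      ∀ x z, FamComp n S x z → FamComp n (fun q => InterRel α (S q)) (f a x c) (f a z c) := by
  intro n
  induction n with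
  | zero =>
    intro S _ _ x z h
    exact congrArg (fun w => f a w c) h
  | succ m ih =>
    cases m with
    | zero =>
      intro S hSr hSc x z h
      exact ⟨key_tol f hmid α hr hs hc hac x z, hSc 0 _ _ _ _ _ _ (hSr 0 a) h (hSr 0 c)⟩
    | succ p =>
      intro S hSr hSc x z h
      obtain ⟨b, h1, h2⟩ := h
      exact ⟨f a b c,
        ⟨key_tol f hmid α hr hs hc hac x b, hSc 0 _ _ _ _ _ _ (hSr 0 a) h1 (hSr 0 c)⟩,
        ih (fun q => S q.succ) (fun q => hSr q.succ) (fun q => hSc q.succ) b z h2⟩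

theorem comp_relpow (R : A → A → Prop) (n : ℕ) (x y z : A)
    (hxy : R x y) (h : RelPow R n y z) : RelPow R (n+1) x z := by
  cases n with
  | zero =>
    have h' : y = z := h
    subst h'
    exact hxy
  | succ m => exact ⟨y, hxy, h⟩

end Aux

theorem stmt10 {A : Type*}
    (k : ℕ) (hk : 1 ≤ k) (d : Fin (k+1) → A → A → A → A)
    (hd0 : ∀ x y z, d 0 x y z = x)
    (hdmid : ∀ (i : Fin (k+1)) x y, d i x y x = x)
    (hdir : ∀ (i : ℕ) (hi : i < k) x z, d ⟨i, by omega⟩ x z z = d ⟨i+1, by omega⟩ x x z)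
    (hdk : ∀ x y z, d (Fin.last k) x y z = z)
    (ℓ : ℕ) (hℓ : 1 ≤ ℓ)
    (α : A → A → Prop)
    (hαrefl : ∀ a, α a a) (hαsymm : ∀ a b, α a b → α b a)
    (hαcompat : ∀ i, Compat3 (d i) α)
    (S : Fin ℓ → A → A → Prop)
    (hSrefl : ∀ q a, S q a a) (hScompat : ∀ q i, Compat3 (d i) (S q)) :
    ∀ a c, InterRel α (FamComp ℓ S) a c →
      RelPow (FamComp ℓ (fun q => InterRel α (S q))) (k - 1) a c := by
  intro a c hac
  obtain ⟨hα, hfam⟩ := hac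
  have e0 : (0 : Fin (k+1)) = ⟨0, by omega⟩ := by ext; simp
  have hTstep : ∀ (i : ℕ) (hi : i < k),
      FamComp ℓ (fun q => InterRel α (S q)) (d ⟨i, by omega⟩ a a c)
        (d ⟨i+1, by omega⟩ a a c) := by
    intro i hi
    have hb := block (d ⟨i, by omega⟩) (hdmid ⟨i, by omega⟩) α hαrefl hαsymm
      (hαcompat ⟨i, by omega⟩) hα ℓ S hSrefl (fun q => hScompat q ⟨i, by omega⟩) a c hfam
    rwa [hdir i hi a c] at hb
  have hchain : ∀ (m i : ℕ) (h1 : 1 ≤ i) (h2 : i + m = k),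
      RelPow (FamComp ℓ (fun q => InterRel α (S q))) m (d ⟨i, by omega⟩ a a c) c := by
    intro m
    induction m with
    | zero =>
      intro i h1 h2
      have hik : i = k := by omega
      subst hik
      exact hdk a a c
    | succ m ih =>
      intro i h1 h2
      exact comp_relpow _ m _ _ c (hTstep i (by omega)) (ih (i+1) (by omega) (by omega))
  have h1a : d ⟨1, by omega⟩ a a c = a := by
    have h0 := hdir 0 hk a c
    rw [← e0, hd0] at h0
    exact h0.symm
  have hres := hchain (k-1) 1 le_rfl (by omega)
  rwa [h1a] at hres
end

section
/- Let A be a set, k ≥ 1 an integer, and let p, j_1, …, j_{k+1} : A³ → A be Gumm operations, that is, satisfying for all elements of A: p(x,z,z) = x; p(x,x,z) = j_1(x,x,z); j_i(x,y,x) = x for 1 ≤ i ≤ k+1; j_i(x,z,z) = j_{i+1}(x,z,z) for odd i with 1 ≤ i ≤ k; j_i(x,x,z) = j_{i+1}(x,x,z) for even i with 1 ≤ i ≤ k; j_{k+1}(x,y,z) = z. Let h ≥ 0 be an integer and suppose that for all congruences α, β, γ with respect to these operations one has α ∩ (β ∘ γ) ⊆ (α ∩ γ) ∘_{h+1} (α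 ∩ β). Then for all congruences α, β, γ with respect to these operations, α ∩ (β ∘ γ ∘ β) ⊆ (α ∩ β) ∘_{h+2k+1} (α ∩ γ). -/
section AuxAlt
variable {A : Type*}

lemma altComp_dest {R S : A → A → Prop} {m : ℕ} {a c : A}
    (hac : AltComp R S (m+1) a c) : ∃ b, R a b ∧ AltComp S R m b c := by
  match m, hac with
  | 0, hac => exact ⟨c, hac, rfl⟩
  | n+1, hac => exact hac

lemma altComp_cons {R S : A → A → Prop} {m : ℕ} {a b c : A}
    (hab : R a b) (hbc : AltComp S R m b c) : AltComp R S (m+1) a c := by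
  match m, hbc with
  | 0, hbc => cases hbc; exact hab
  | n+1, hbc => exact ⟨b, hab, hbc⟩

lemma altComp_mono : ∀ (m : ℕ) (R S : A → A → Prop), (∀ x, R x x) → (∀ x, S x x) →
    ∀ a c, AltComp R S m a c → AltComp R S (m+1) a c := by
  intro m
  induction m with
  | zero => intro R S hR hS a c hac; cases hac; exact hR a
  | succ n ih =>
    intro R S hR hS a c hac
    obtain ⟨b, hab, hbc⟩ := altComp_dest hac
    exact altComp_cons hab (ih S R hS hR b c hbc)

lemma altComp_append : ∀ (m : ℕ) (R S : A → A → Prop) (n : ℕ) (a b c : A),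
    AltComp R S m a b →
    (if m % 2 = 0 then AltComp R S n b c else AltComp S R n b c) →
    AltComp R S (m+n) a c := by
  intro m
  induction m with
  | zero =>
    intro R S n a b c hab h2
    cases hab
    rw [if_pos (by omega)] at h2
    simpa using h2
  | succ t ih =>
    intro R S n a b c hab h2
    obtain ⟨x, hax, hxb⟩ := altComp_dest hab
    have h2' : if t % 2 = 0 then AltComp S R n b c else AltComp R S n b c := by
      by_cases ht : t % 2 = 0
      · rw [if_pos ht]; rw [if_neg (by omega)] at h2; exact h2
      · rw [if_neg ht]; rw [if_pos (by omega)] at h2; exact h2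
    have := altComp_cons hax (ih S R n x b c hxb h2')
    have e : t + n + 1 = t + 1 + n := by omega
    rwa [e] at this

lemma altComp_glue : ∀ (m : ℕ) (R S : A → A → Prop),
    Transitive R → Transitive S → ∀ (n : ℕ) (a b c : A),
    AltComp R S (m+1) a b →
    (if m % 2 = 0 then AltComp R S (n+1) b c else AltComp S R (n+1) b c) →
    AltComp R S (m+n+1) a c := by
  intro m
  induction m with
  | zero =>
    intro R S hR hS n a b c hab h2
    rw [if_pos (by omega)] at h2
    obtain ⟨x, hbx, hxc⟩ := altComp_dest h2
    have : AltComp R S (n+1) a c := altComp_cons (hR hab hbx) hxc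
    simpa using this
  | succ t ih =>
    intro R S hR hS n a b c hab h2
    obtain ⟨x, hax, hxb⟩ := altComp_dest hab
    have h2' : if t % 2 = 0 then AltComp S R (n+1) b c else AltComp R S (n+1) b c := by
      by_cases ht : t % 2 = 0
      · rw [if_pos ht]; rw [if_neg (by omega)] at h2; exact h2
      · rw [if_neg ht]; rw [if_pos (by omega)] at h2; exact h2
    have := altComp_cons hax (ih S R hS hR n x b c hxb h2')
    have e : t + n + 1 + 1 = t + 1 + n + 1 := by omega
    rwa [e] at this

end AuxAlt
theorem stmt14 {A : Type*}
    (k : ℕ) (hk : 1 ≤ k)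
    (p : A → A → A → A) (j : Fin (k+1) → A → A → A → A)
    (hp : ∀ x z, p x z z = x)
    (hpj : ∀ x z, p x x z = j 0 x x z)
    (hjmid : ∀ (i : Fin (k+1)) x y, j i x y x = x)
    (hjodd : ∀ (i : ℕ) (h1 : 1 ≤ i) (h2 : i ≤ k), i % 2 = 1 →
      ∀ x z, j ⟨i-1, by omega⟩ x z z = j ⟨i, by omega⟩ x z z)
    (hjeven : ∀ (i : ℕ) (h1 : 1 ≤ i) (h2 : i ≤ k), i % 2 = 0 →
      ∀ x z, j ⟨i-1, by omega⟩ x x z = j ⟨i, by omega⟩ x x z)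
    (hjlast : ∀ x y z, j (Fin.last k) x y z = z)
    (h : ℕ)
    (H : ∀ α β γ : A → A → Prop,
      Equivalence α → Compat3 p α → (∀ i, Compat3 (j i) α) →
      Equivalence β → Compat3 p β → (∀ i, Compat3 (j i) β) →
      Equivalence γ → Compat3 p γ → (∀ i, Compat3 (j i) γ) →
      ∀ a c, InterRel α (Comp β γ) a c →
        AltComp (InterRel α γ) (InterRel α β) (h + 1) a c) :
    ∀ α β γ : A → A → Prop,
      Equivalence α → Compat3 p α → (∀ i, Compat3 (j i) α) →
      Equivalence β → Compat3 p β → (∀ i, Compat3 (j i) β) →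
      Equivalence γ → Compat3 p γ → (∀ i, Compat3 (j i) γ) →
      ∀ a c, InterRel α (Comp β (Comp γ β)) a c →
        AltComp (InterRel α β) (InterRel α γ) (h + 2 * k + 1) a c := by
  intro α β γ hα hpα hjα hβ hpβ hjβ hγ hpγ hjγ a c hmain
  obtain ⟨hac, b, hab, d, hbd, hdc⟩ := hmain
  -- basic α-facts: all j i a _ c are α-related to a
  have hAv : ∀ i : Fin (k+1), α (j i a b c) a := by
    intro i
    have := hjα i a a b b c a (hα.refl a) (hα.refl b) (hα.symm hac)
    rwa [hjmid i a b] at this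
  have hAu : ∀ i : Fin (k+1), α (j i a d c) a := by
    intro i
    have := hjα i a a d d c a (hα.refl a) (hα.refl d) (hα.symm hac)
    rwa [hjmid i a d] at this
  have hGvu : ∀ i : Fin (k+1), γ (j i a b c) (j i a d c) := fun i =>
    hjγ i a a b d c c (hγ.refl a) hbd (hγ.refl c)
  have hBu : ∀ i : Fin (k+1), β (j i a d c) (j i a c c) := fun i =>
    hjβ i a a d c c c (hβ.refl a) hdc (hβ.refl c)
  have hBv : ∀ i : Fin (k+1), β (j i a b c) (j i a a c) := fun i =>
    hjβ i a a b a c c (hβ.refl a) (hβ.symm hab) (hβ.refl c)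
  -- refl/trans for the intersections
  have reflB : ∀ x, InterRel α β x x := fun x => ⟨hα.refl x, hβ.refl x⟩
  have reflG : ∀ x, InterRel α γ x x := fun x => ⟨hα.refl x, hγ.refl x⟩
  have transB : Transitive (InterRel α β) := fun _ _ _ h1 h2 =>
    ⟨hα.trans h1.1 h2.1, hβ.trans h1.2 h2.2⟩
  have transG : Transitive (InterRel α γ) := fun _ _ _ h1 h2 =>
    ⟨hα.trans h1.1 h2.1, hγ.trans h1.2 h2.2⟩
  -- the middle chain of length 2k
  have middle : ∀ t : ℕ, ∀ i : Fin (k+1), (i : ℕ) + t = k →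
      AltComp (InterRel α γ) (InterRel α β) (2*t)
        (if (i : ℕ) % 2 = 0 then j i a b c else j i a d c) c := by
    intro t
    induction t with
    | zero =>
      intro i hi
      have hik : i = Fin.last k := Fin.ext (by simpa using hi)
      show (if (i : ℕ) % 2 = 0 then j i a b c else j i a d c) = c
      rw [hik]
      split <;> exact hjlast a _ c
    | succ t ih =>
      intro i hi
      have hi1 : (i : ℕ) + 1 < k + 1 := by omega
      have ihp := ih ⟨(i : ℕ) + 1, hi1⟩ (by simp; omega)
      show AltComp (InterRel α γ) (InterRel α β) ((2*t+1)+1)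
        (if (i : ℕ) % 2 = 0 then j i a b c else j i a d c) c
      by_cases hpar : (i : ℕ) % 2 = 0
      · rw [if_pos hpar]
        rw [if_neg (by simp; omega)] at ihp
        -- j i a b c --γ-- j i a d c --β-- j ⟨i+1⟩ a d c
        have e : j i a c c = j ⟨(i : ℕ) + 1, hi1⟩ a c c :=
          hjodd ((i : ℕ) + 1) (by omega) (by omega) (by omega) a c
        have step2 : β (j i a d c) (j ⟨(i : ℕ) + 1, hi1⟩ a d c) := by
          have h1 := hBu i
          rw [e] at h1
          exact hβ.trans h1 (hβ.symm (hBu ⟨(i : ℕ) + 1, hi1⟩))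
        refine altComp_cons ⟨hα.trans (hAv i) (hα.symm (hAu i)), hGvu i⟩ ?_
        exact altComp_cons
          ⟨hα.trans (hAu i) (hα.symm (hAu ⟨(i : ℕ) + 1, hi1⟩)), step2⟩ ihp
      · rw [if_neg hpar]
        rw [if_pos (by simp; omega)] at ihp
        have e : j i a a c = j ⟨(i : ℕ) + 1, hi1⟩ a a c :=
          hjeven ((i : ℕ) + 1) (by omega) (by omega) (by omega) a c
        have step2 : β (j i a b c) (j ⟨(i : ℕ) + 1, hi1⟩ a b c) := by
          have h1 := hBv i
          rw [e] at h1
          exact hβ.trans h1 (hβ.symm (hBv ⟨(i : ℕ) + 1, hi1⟩))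
        refine altComp_cons
          ⟨hα.trans (hAu i) (hα.symm (hAv i)), hγ.symm (hGvu i)⟩ ?_
        exact altComp_cons
          ⟨hα.trans (hAv i) (hα.symm (hAv ⟨(i : ℕ) + 1, hi1⟩)), step2⟩ ihp
  -- the front chain of length h+1 from a to j 0 a b c
  have hfront0 : α a (j 0 a b c) := hα.symm (hAv 0)
  have hn : γ a (p a b d) := by
    have := hpγ a a b b b d (hγ.refl a) (hγ.refl b) hbd
    rwa [hp a b] at this
  have hm : β (p a b d) (j 0 a b c) := by
    have h1 : β (p a b d) (p a b c) := hpβ a a b b d c (hβ.refl a) (hβ.refl b) hdc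
    have h2 : β (p a b c) (p a a c) := hpβ a a b a c c (hβ.refl a) (hβ.symm hab) (hβ.refl c)
    have h3 : β (j 0 a a c) (j 0 a b c) := hjβ 0 a a a b c c (hβ.refl a) hab (hβ.refl c)
    rw [hpj a c] at h2
    exact hβ.trans h1 (hβ.trans h2 h3)
  have hfront : AltComp (InterRel α β) (InterRel α γ) (h+1) a (j 0 a b c) :=
    H α γ β hα hpα hjα hγ hpγ hjγ hβ hpβ hjβ a (j 0 a b c) ⟨hfront0, p a b d, hn, hm⟩
  -- the middle chain starting at j 0 a b c
  have hzero : (0 : Fin (k+1)) = ⟨0, by omega⟩ := by ext; simp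
  have hmid : AltComp (InterRel α γ) (InterRel α β) (2*k) (j 0 a b c) c := by
    have := middle k ⟨0, by omega⟩ (by simp)
    rw [if_pos (by simp)] at this
    rwa [hzero]
  -- combine
  by_cases hpar : h % 2 = 0
  · have := altComp_append (h+1) (InterRel α β) (InterRel α γ) (2*k) a (j 0 a b c) c
      hfront (by rw [if_neg (by omega)]; exact hmid)
    have e : h + 1 + 2*k = h + 2*k + 1 := by omega
    rwa [e] at this
  · have h2k : 2*k = (2*k-1)+1 := by omega
    have hmid2 : AltComp (InterRel α γ) (InterRel α β) ((2*k-1)+1) (j 0 a b c) c := by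
      rw [← h2k]; exact hmid
    have hg := altComp_glue h (InterRel α β) (InterRel α γ) transB transG (2*k-1) a
      (j 0 a b c) c hfront (by rw [if_neg hpar]; exact hmid2)
    have := altComp_mono (h + (2*k-1) + 1) (InterRel α β) (InterRel α γ) reflB reflG a c hg
    have e : h + (2*k-1) + 1 + 1 = h + 2*k + 1 := by omega
    rwa [e] at this
end

section
/- Let A be a set and let M : A³ → A be a majority operation, that is, M(x,x,y) = M(x,y,x) = M(y,x,x) = x for all x, y in A. Let R, S, T be reflexive relations on A, each compatible with M. Then R ∩ (S ∘ T) ⊆ (R ∩ S) ∘ (R ∩ T). -/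
theorem stmt15 {A : Type*}
    (M : A → A → A → A)
    (hM1 : ∀ x y, M x x y = x) (hM2 : ∀ x y, M x y x = x) (hM3 : ∀ x y, M y x x = x)
    (R S T : A → A → Prop)
    (hRrefl : ∀ a, R a a) (hRM : Compat3 M R)
    (hSrefl : ∀ a, S a a) (hSM : Compat3 M S)
    (hTrefl : ∀ a, T a a) (hTM : Compat3 M T) :
    ∀ a c, InterRel R (Comp S T) a c →
      Comp (InterRel R S) (InterRel R T) a c := by
  rintro a c ⟨hac, b, hab, hbc⟩
  refine ⟨M a b c, ⟨?_, ?_⟩, ?_, ?_⟩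
  · have := hRM a a b b a c (hRrefl a) (hRrefl b) hac
    rwa [hM2] at this
  · have := hSM a a a b c c (hSrefl a) hab (hSrefl c)
    rwa [hM1] at this
  · have := hRM a c b b c c hac (hRrefl b) (hRrefl c)
    rwa [hM2] at this
  · have := hTM a a b c c c (hTrefl a) hbc (hTrefl c)
    rwa [hM3] at this
end

section
/- Let A be a set, let m, k, ℓ ≥ 1 be integers, and let t_0,…,t_{k+1} : A^{m+2} → A be operations satisfying the reversed Jónsson-type condition (B^⌣). Let α be a tolerance with respect to the operations t_0,…,t_{k+1}, and let R, S_0, S_1, …, S_ℓ be reflexive relations on A, each compatible with every t_i, such that R = S_0 ∘ S_1 ∘ ⋯ ∘ S_ℓ. Set Θ = (α ∩ S_0) ∘ (α ∩ S_1) ∘ ⋯ ∘ (α ∩ S_ℓ). Then α ∩ (R ∘_m R^⌣) ⊆ Θ^⌣ ∘_k Θ. -/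
/-- Prepend an element to a chain. -/
private def consChain {A : Type*} (a : A) (z : ℕ → A) : ℕ → A
  | 0 => a
  | j+1 => z j

section chainLemmas
variable {A : Type*}

private lemma altcomp_intro : ∀ (n : ℕ) (R S : A → A → Prop) (z : ℕ → A),
    (∀ j, j < n + 1 → (if j % 2 = 0 then R else S) (z j) (z (j+1))) →
    AltComp R S (n+1) (z 0) (z (n+1)) := by
  intro n
  induction n with
  | zero =>
    intro R S z h
    have h0 := h 0 (by omega)
    rw [if_pos (by norm_num)] at h0
    exact h0
  | succ n ih =>
    intro R S z h
    show Comp R (AltComp S R (n+1)) (z 0) (z (n+1+1))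
    refine ⟨z 1, ?_, ?_⟩
    · have h0 := h 0 (by omega)
      rwa [if_pos (by norm_num)] at h0
    · exact ih S R (fun j => z (j+1)) (fun j hj => by
        have h2 := h (j+1) (by omega)
        by_cases hp : j % 2 = 0
        · rw [if_pos hp]
          rwa [if_neg (show ¬ ((j+1) % 2 = 0) by omega)] at h2
        · rw [if_neg hp]
          rwa [if_pos (show (j+1) % 2 = 0 by omega)] at h2)

private lemma altcomp_elim : ∀ (n : ℕ) (R S : A → A → Prop) (a c : A),
    AltComp R S (n+1) a c →
    ∃ z : ℕ → A, z 0 = a ∧ z (n+1) = c ∧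
      ∀ j, j < n + 1 → (if j % 2 = 0 then R else S) (z j) (z (j+1)) := by
  intro n
  induction n with
  | zero =>
    intro R S a c h
    have h' : R a c := h
    refine ⟨consChain a (fun _ => c), rfl, rfl, ?_⟩
    intro j hj
    have hj0 : j = 0 := by omega
    subst hj0
    rw [if_pos (by norm_num)]
    exact h'
  | succ n ih =>
    intro R S a c h
    have h' : Comp R (AltComp S R (n+1)) a c := h
    obtain ⟨b, hab, hbc⟩ := h'
    obtain ⟨z, hz0, hzn, hzs⟩ := ih S R b c hbc
    refine ⟨consChain a z, rfl, hzn, ?_⟩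
    intro j hj
    cases j with
    | zero =>
      rw [if_pos (by norm_num)]
      show R a (z 0)
      rw [hz0]; exact hab
    | succ j =>
      have h2 := hzs j (by omega)
      show (if (j+1) % 2 = 0 then R else S) (z j) (z (j+1))
      by_cases hp : j % 2 = 0
      · rw [if_neg (show ¬ ((j+1) % 2 = 0) by omega)]
        rwa [if_pos hp] at h2
      · rw [if_pos (show (j+1) % 2 = 0 by omega)]
        rwa [if_neg hp] at h2

private lemma famcomp_intro : ∀ (n : ℕ) (S : Fin (n+1) → A → A → Prop) (g : ℕ → A),
    (∀ q (hq : q < n + 1), S ⟨q, hq⟩ (g q) (g (q+1))) →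
    FamComp (n+1) S (g 0) (g (n+1)) := by
  intro n
  induction n with
  | zero =>
    intro S g h
    have h0 := h 0 (by omega)
    have e : (⟨0, by omega⟩ : Fin 1) = 0 := Subsingleton.elim _ _
    rw [e] at h0
    exact h0
  | succ n ih =>
    intro S g h
    show Comp (S 0) (FamComp (n+1) (fun i => S i.succ)) (g 0) (g (n+1+1))
    refine ⟨g 1, ?_, ?_⟩
    · have h0 := h 0 (by omega)
      have e : (⟨0, by omega⟩ : Fin (n+2)) = 0 := Fin.ext (by rw [Fin.val_zero])
      rwa [e] at h0
    · exact ih (fun i => S i.succ) (fun q => g (q+1)) (fun q hq => h (q+1) (by omega))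

private lemma famcomp_elim : ∀ (n : ℕ) (S : Fin (n+1) → A → A → Prop) (a c : A),
    FamComp (n+1) S a c →
    ∃ g : ℕ → A, g 0 = a ∧ g (n+1) = c ∧
      ∀ q (hq : q < n + 1), S ⟨q, hq⟩ (g q) (g (q+1)) := by
  intro n
  induction n with
  | zero =>
    intro S a c h
    have h' : S 0 a c := h
    refine ⟨consChain a (fun _ => c), rfl, rfl, ?_⟩
    intro q hq
    have hq0 : q = 0 := by omega
    subst hq0
    have e : (⟨0, hq⟩ : Fin 1) = 0 := Subsingleton.elim _ _
    rw [e]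
    exact h'
  | succ n ih =>
    intro S a c h
    have h' : Comp (S 0) (FamComp (n+1) (fun i => S i.succ)) a c := h
    obtain ⟨b, hab, hbc⟩ := h'
    obtain ⟨g, hg0, hgn, hgs⟩ := ih (fun i => S i.succ) b c hbc
    refine ⟨consChain a g, rfl, hgn, ?_⟩
    intro q hq
    cases q with
    | zero =>
      have e : (⟨0, hq⟩ : Fin (n+2)) = 0 := Fin.ext (by rw [Fin.val_zero])
      rw [e]
      show S 0 a (g 0)
      rw [hg0]; exact hab
    | succ q =>
      have h2 := hgs q (by omega)
      exact h2

end chainLemmas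

theorem stmt16 {A : Type*} (m k ℓ : ℕ) (hm : 1 ≤ m) (hk : 1 ≤ k) (hℓ : 1 ≤ ℓ)
    (t : Fin (k+2) → (Fin (m+2) → A) → A)
    (hB1 : ∀ x : Fin (m+2) → A, t 0 x = x 0)
    (hB2 : ∀ (i : Fin (k+2)) (x : Fin (m+2) → A), x (Fin.last (m+1)) = x 0 → t i x = x 0)
    (hB3odd : ∀ (i : ℕ) (hi : i ≤ k), i % 2 = 1 →
      ∀ x : Fin (m+2) → A, t ⟨i, by omega⟩ (EvenPair m x) = t ⟨i+1, by omega⟩ (EvenPair m x))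
    (hB3even : ∀ (i : ℕ) (hi : i ≤ k), i % 2 = 0 →
      ∀ x : Fin (m+2) → A, t ⟨i, by omega⟩ (OddPair m x) = t ⟨i+1, by omega⟩ (OddPair m x))
    (hB4 : ∀ x : Fin (m+2) → A, t (Fin.last (k+1)) x = x (Fin.last (m+1)))
    (α : A → A → Prop)
    (hαrefl : ∀ a, α a a) (hαsymm : ∀ a b, α a b → α b a)
    (hαcompat : ∀ i, CompatV (t i) α)
    (R : A → A → Prop) (S : Fin (ℓ+1) → A → A → Prop)
    (hRrefl : ∀ a, R a a) (hRcompat : ∀ i, CompatV (t i) R)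
    (hSrefl : ∀ q a, S q a a) (hScompat : ∀ q i, CompatV (t i) (S q))
    (hR : R = FamComp (ℓ+1) S)
    (Θ : A → A → Prop) (hΘ : Θ = FamComp (ℓ+1) (fun q => InterRel α (S q))) :
    ∀ a c, InterRel α (AltComp R (Conv R) m) a c → AltComp (Conv Θ) Θ k a c := by
  obtain ⟨m, rfl⟩ : ∃ n, m = n + 1 := ⟨m - 1, by omega⟩
  obtain ⟨k, rfl⟩ : ∃ n, k = n + 1 := ⟨k - 1, by omega⟩
  intro a c hIn
  obtain ⟨hac, hRm⟩ := hIn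
  obtain ⟨z, hz0, hzm, hzstep⟩ := altcomp_elim m R (Conv R) a c hRm
  -- decompose each edge of the alternating R-chain into an S-chain
  have hedge : ∀ e, e < m + 1 →
      FamComp (ℓ+1) S (z (2 * ((e+1)/2))) (z (2 * (e/2) + 1)) := by
    intro e he
    have hs := hzstep e he
    by_cases hp : e % 2 = 0
    · rw [if_pos hp] at hs
      rw [hR] at hs
      have e1 : 2 * ((e+1)/2) = e := by omega
      have e2 : 2 * (e/2) + 1 = e + 1 := by omega
      rw [e1, e2]
      exact hs
    · rw [if_neg hp] at hs
      have hs' : R (z (e+1)) (z e) := hs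
      rw [hR] at hs'
      have e1 : 2 * ((e+1)/2) = e + 1 := by omega
      have e2 : 2 * (e/2) + 1 = e := by omega
      rw [e1, e2]
      exact hs'
  have hedge2 : ∀ e, ∃ gE : ℕ → A, e < m + 1 →
      gE 0 = z (2 * ((e+1)/2)) ∧ gE (ℓ+1) = z (2 * (e/2) + 1) ∧
      ∀ q (hq : q < ℓ + 1), S ⟨q, hq⟩ (gE q) (gE (q+1)) := by
    intro e
    by_cases he : e < m + 1
    · obtain ⟨gE, h1, h2, h3⟩ := famcomp_elim ℓ S _ _ (hedge e he)
      exact ⟨gE, fun _ => ⟨h1, h2, h3⟩⟩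
    · exact ⟨fun _ => a, fun h => absurd h he⟩
  choose g hg using hedge2
  -- the base tuple and the interpolating tuples
  let Z : Fin (m+1+2) → A := fun j => z (min j.val (m+1))
  let V : ℕ → Fin (m+1+2) → A := fun q j =>
    if j.val = 0 then a else if j.val = m+1+1 then c else g (j.val - 1) q
  have hVdef : ∀ q (j : Fin (m+1+2)), V q j =
      if j.val = 0 then a else if j.val = m+1+1 then c else g (j.val - 1) q :=
    fun _ _ => rfl
  have hEven : ∀ j : Fin (m+1+2),
      EvenPair (m+1) Z j = z (min (2 * (j.val / 2)) (m+1)) := fun _ => rfl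
  have hOdd : ∀ j : Fin (m+1+2),
      OddPair (m+1) Z j = z (min (2 * ((j.val + 1) / 2) - 1) (m+1)) := fun _ => rfl
  have hVa : ∀ q, V q 0 = a := by
    intro q
    rw [hVdef]
    rw [Fin.val_zero, if_pos rfl]
  have hVc : ∀ q, V q (Fin.last (m+1+1)) = c := by
    intro q
    rw [hVdef]
    rw [Fin.val_last, if_neg (by omega), if_pos rfl]
  -- the key α-trick, from (B2)
  have aux : ∀ u : A, α u a → α u c → ∀ (i' : Fin (k+1+2)) (W : Fin (m+1+2) → A),
      W 0 = a → W (Fin.last (m+1+1)) = c → α u (t i' W) := by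
    intro u hua huc i' W hW0 hWl
    let U : Fin (m+1+2) → A := fun j => if j.val = 0 ∨ j.val = m+1+1 then u else W j
    have hUdef : ∀ j : Fin (m+1+2),
        U j = if j.val = 0 ∨ j.val = m+1+1 then u else W j := fun _ => rfl
    have hUl : U (Fin.last (m+1+1)) = U 0 := by
      rw [hUdef, hUdef, Fin.val_last, Fin.val_zero]
      rw [if_pos (Or.inr rfl), if_pos (Or.inl rfl)]
    have hUt : t i' U = u := by
      rw [hB2 i' U hUl, hUdef, Fin.val_zero, if_pos (Or.inl rfl)]
    have hcoord : ∀ j, α (U j) (W j) := by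
      intro j
      by_cases h0 : j.val = 0
      · have hj : j = 0 := Fin.ext (by rw [Fin.val_zero]; exact h0)
        have hU0 : U j = u := by rw [hUdef, if_pos (Or.inl h0)]
        rw [hU0, hj, hW0]
        exact hua
      · by_cases hl : j.val = m+1+1
        · have hj : j = Fin.last (m+1+1) := Fin.ext (by rw [Fin.val_last]; exact hl)
          have hU0 : U j = u := by rw [hUdef, if_pos (Or.inr hl)]
          rw [hU0, hj, hWl]
          exact huc
        · have hU0 : U j = W j := by rw [hUdef, if_neg (by tauto)]
          rw [hU0]
          exact hαrefl _
    have hfin := hαcompat i' U W hcoord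
    rwa [hUt] at hfin
  have hαaV : ∀ (i' : Fin (k+1+2)) (q : ℕ), α a (t i' (V q)) :=
    fun i' q => aux a (hαrefl a) hac i' (V q) (hVa q) (hVc q)
  have hαcV : ∀ (i' : Fin (k+1+2)) (q : ℕ), α c (t i' (V q)) :=
    fun i' q => aux c (hαsymm a c hac) (hαrefl c) i' (V q) (hVa q) (hVc q)
  -- each micro-step along the interpolation is in α ∩ S_q
  have hstep : ∀ (i' : Fin (k+1+2)) (q : ℕ) (hq : q < ℓ + 1),
      InterRel α (S ⟨q, hq⟩) (t i' (V q)) (t i' (V (q+1))) := by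
    intro i' q hq
    refine ⟨?_, ?_⟩
    · exact aux (t i' (V q)) (hαsymm _ _ (hαaV i' q)) (hαsymm _ _ (hαcV i' q)) i'
        (V (q+1)) (hVa _) (hVc _)
    · apply hScompat ⟨q, hq⟩ i' (V q) (V (q+1))
      intro j
      by_cases h0 : j.val = 0
      · have e1 : V q j = a := by rw [hVdef, if_pos h0]
        have e2 : V (q+1) j = a := by rw [hVdef, if_pos h0]
        rw [e1, e2]; exact hSrefl _ a
      · by_cases hl : j.val = m+1+1
        · have e1 : V q j = c := by rw [hVdef, if_neg h0, if_pos hl]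
          have e2 : V (q+1) j = c := by rw [hVdef, if_neg h0, if_pos hl]
          rw [e1, e2]; exact hSrefl _ c
        · have e1 : V q j = g (j.val - 1) q := by rw [hVdef, if_neg h0, if_neg hl]
          have e2 : V (q+1) j = g (j.val - 1) (q+1) := by rw [hVdef, if_neg h0, if_neg hl]
          rw [e1, e2]
          have hjl := j.isLt
          exact (hg (j.val - 1) (by omega)).2.2 q hq
  -- identify the endpoints of the interpolation with the paired tuples
  have hV0 : V 0 = EvenPair (m+1) Z := by
    funext j
    rw [hVdef 0 j, hEven j]
    have hjl := j.isLt
    by_cases h0 : j.val = 0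
    · rw [if_pos h0, ← hz0]; congr 1; omega
    · by_cases hl : j.val = m+1+1
      · rw [if_neg h0, if_pos hl, ← hzm]; congr 1; omega
      · rw [if_neg h0, if_neg hl, (hg (j.val - 1) (by omega)).1]
        congr 1; omega
  have hV1 : V (ℓ+1) = OddPair (m+1) Z := by
    funext j
    rw [hVdef (ℓ+1) j, hOdd j]
    have hjl := j.isLt
    by_cases h0 : j.val = 0
    · rw [if_pos h0, ← hz0]; congr 1; omega
    · by_cases hl : j.val = m+1+1
      · rw [if_neg h0, if_pos hl, ← hzm]; congr 1; omega
      · rw [if_neg h0, if_neg hl, (hg (j.val - 1) (by omega)).2.1]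
        congr 1; omega
  -- the key Θ-step
  have key : ∀ i' : Fin (k+1+2), Θ (t i' (EvenPair (m+1) Z)) (t i' (OddPair (m+1) Z)) := by
    intro i'
    rw [hΘ, ← hV0, ← hV1]
    exact famcomp_intro ℓ (fun q => InterRel α (S q)) (fun q => t i' (V q))
      (fun q hq => hstep i' q hq)
  -- the macro chain
  let p : ℕ → A := fun i =>
    if h : i ≤ k + 1 then
      t ⟨i, by omega⟩ (if i % 2 = 0 then OddPair (m+1) Z else EvenPair (m+1) Z)
    else c
  have hpdef : ∀ i (h : i ≤ k + 1), p i =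
      t ⟨i, by omega⟩ (if i % 2 = 0 then OddPair (m+1) Z else EvenPair (m+1) Z) :=
    fun i h => dif_pos h
  have hp0 : p 0 = a := by
    rw [hpdef 0 (by omega), if_pos (by norm_num)]
    have e0 : (⟨0, by omega⟩ : Fin (k+1+2)) = 0 := Fin.ext (by rw [Fin.val_zero])
    rw [e0, hB1, hOdd, Fin.val_zero, ← hz0]
    congr 1 <;> omega
  have hpk : p (k+1) = c := by
    by_cases hkp : (k+1) % 2 = 0
    · rw [hpdef (k+1) le_rfl, if_pos hkp]
      rw [hB3even (k+1) le_rfl hkp Z]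
      have el : (⟨k+1+1, by omega⟩ : Fin (k+1+2)) = Fin.last (k+1+1) := rfl
      rw [el, hB4, hOdd, Fin.val_last, ← hzm]
      congr 1
      omega
    · rw [hpdef (k+1) le_rfl, if_neg hkp]
      rw [hB3odd (k+1) le_rfl (by omega) Z]
      have el : (⟨k+1+1, by omega⟩ : Fin (k+1+2)) = Fin.last (k+1+1) := rfl
      rw [el, hB4, hEven, Fin.val_last, ← hzm]
      congr 1
      omega
  have hpstep : ∀ j, j < k + 1 → (if j % 2 = 0 then Conv Θ else Θ) (p j) (p (j+1)) := by
    intro i hi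
    by_cases hip : i % 2 = 0
    · rw [if_pos hip]
      show Θ (p (i+1)) (p i)
      rw [hpdef (i+1) (by omega), if_neg (show ¬ ((i+1) % 2 = 0) by omega)]
      rw [hpdef i (by omega), if_pos hip]
      rw [hB3even i (by omega) hip Z]
      exact key ⟨i+1, by omega⟩
    · rw [if_neg hip]
      rw [hpdef i (by omega), if_neg hip]
      rw [hpdef (i+1) (by omega), if_pos (show (i+1) % 2 = 0 by omega)]
      rw [hB3odd i (by omega) (by omega) Z]
      exact key ⟨i+1, by omega⟩
  have hfin := altcomp_intro k (Conv Θ) Θ p hpstep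
  rw [hp0, hpk] at hfin
  exact hfin
end
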